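/- arXiv:2205.14309 — 5 statements merged into one kernel-verified Lean document; each statement's English description precedes it below -/
import Mathlib

section
/- Let A and B be positive definite p×p real matrices with A ⪯ B (i.e., B − A is positive semidefinite). Then for any vector x ∈ ℝ^p, xᵀ A⁻¹ x ≤ (det B / det A) · xᵀ B⁻¹ x. -/
/-!
Put `T = A^{1/2}` and `N = T⁻¹ B T⁻¹`. Then `A ≤ B` becomes `1 ≤ N`, so every eigenvalue of `N`
is at least `1` and hence at most their product `det N = det B / det A`. Inverting, the spectrum
of `N⁻¹ = T B⁻¹ T` lies above `(det N)⁻¹`, i.e. `(det N)⁻¹ ≤ N⁻¹`; conjugating back by `T⁻¹`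
gives `A⁻¹ ≤ (det B / det A) • B⁻¹` in the Loewner order.
-/

open Matrix

open scoped MatrixOrder

namespace Matrix

variable {n : Type*} [Fintype n] [DecidableEq n]

theorem IsHermitian.le_det_of_mem_spectrum {N : Matrix n n ℝ} (hN : N.IsHermitian) (h1 : 1 ≤ N)
    {x : ℝ} (hx : x ∈ spectrum ℝ N) : x ≤ N.det := by
  have hl : ∀ i, 1 ≤ hN.eigenvalues i := fun i =>
    (CFC.one_le_iff N hN.isSelfAdjoint).1 h1 _ (hN.eigenvalues_mem_spectrum_real i)
  obtain ⟨i, rfl⟩ := hN.spectrum_real_eq_range_eigenvalues ▸ hx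
  rw [hN.det_eq_prod_eigenvalues, ← Finset.mul_prod_erase _ _ (Finset.mem_univ i)]
  exact le_mul_of_one_le_right (zero_le_one.trans (hl i)) (Finset.one_le_prod fun j _ => hl j)

theorem IsHermitian.algebraMap_inv_det_le_inv {N : Matrix n n ℝ} (hN : N.IsHermitian)
    (h1 : 1 ≤ N) : algebraMap ℝ (Matrix n n ℝ) N.det⁻¹ ≤ N⁻¹ := by
  have hspec : ∀ x ∈ spectrum ℝ N, 1 ≤ x := (CFC.one_le_iff N hN.isSelfAdjoint).1 h1
  have hpos : ∀ x ∈ spectrum ℝ N, 0 < x := fun x hx => zero_lt_one.trans_le (hspec x hx)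
  have hunit : IsUnit N := (spectrum.zero_notMem_iff ℝ).1 fun h => (hpos 0 h).false
  rw [nonsing_inv_eq_ringInverse, ← cfc_ringInverse_id (R := ℝ) N hunit hN.isSelfAdjoint,
    algebraMap_le_cfc_iff _ _ _ (continuousOn_inv₀.mono fun x hx => (hpos x hx).ne')
      hN.isSelfAdjoint]
  exact fun x hx => inv_anti₀ (hpos x hx) (hN.le_det_of_mem_spectrum h1 hx)

theorem PosDef.inv_le_det_div_det_smul_inv {A B : Matrix n n ℝ} (hA : A.PosDef) (hB : B.PosDef)
    (hAB : A ≤ B) : A⁻¹ ≤ (B.det / A.det) • B⁻¹ := by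
  set T := CFC.sqrt A
  have hT : IsStrictlyPositive T := IsStrictlyPositive.sqrt A hA.isStrictlyPositive
  have hTT : T * T = A := CFC.sqrt_mul_sqrt_self A hA.posSemidef.nonneg
  have hTu : IsUnit T.det := (isUnit_iff_isUnit_det T).1 hT.isUnit
  have hTs : star T⁻¹ = T⁻¹ := by
    rw [star_eq_conjTranspose, conjTranspose_nonsing_inv, ← star_eq_conjTranspose,
      hT.isSelfAdjoint.star_eq]
  set N := T⁻¹ * B * T⁻¹
  have hN : N.IsHermitian := by
    have := hB.isHermitian.isSelfAdjoint.conjugate' T⁻¹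
    rwa [hTs] at this
  have h1 : 1 ≤ N := by
    have hTAT : T⁻¹ * A * T⁻¹ = 1 := by
      rw [← hTT, Matrix.mul_assoc, Matrix.mul_assoc, nonsing_inv_mul_cancel_left _ _ hTu,
        mul_nonsing_inv _ hTu]
    simpa only [hTs, hTAT] using star_left_conjugate_le_conjugate hAB T⁻¹
  have hNinv : T⁻¹ * N⁻¹ * T⁻¹ = B⁻¹ := by
    simp only [N, Matrix.mul_inv_rev, nonsing_inv_nonsing_inv _ hTu, Matrix.mul_assoc,
      mul_nonsing_inv _ hTu, Matrix.mul_one, nonsing_inv_mul_cancel_left _ _ hTu]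
  have hTinv : T⁻¹ * T⁻¹ = A⁻¹ := by rw [← Matrix.mul_inv_rev, hTT]
  have hdet : N.det = B.det / A.det := by
    simp only [N, ← hTT, det_mul, det_nonsing_inv, Ring.inverse_eq_inv]
    field_simp [hTu.ne_zero]
  have hc : 0 < N.det := hdet ▸ div_pos hB.det_pos hA.det_pos
  have key := star_left_conjugate_le_conjugate (hN.algebraMap_inv_det_le_inv h1) T⁻¹
  rw [hTs, hNinv, Algebra.algebraMap_eq_smul_one, Matrix.mul_smul, Matrix.mul_one,
    Matrix.smul_mul, hTinv] at key
  have := smul_le_smul_of_nonneg_left key hc.le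
  rwa [smul_smul, mul_inv_cancel₀ hc.ne', one_smul, hdet] at this

end Matrix

theorem stmt_2 {p : ℕ} (A B : Matrix (Fin p) (Fin p) ℝ)
    (hA : A.PosDef) (hB : B.PosDef) (hAB : (B - A).PosSemidef)
    (x : Fin p → ℝ) :
    x ⬝ᵥ A⁻¹.mulVec x ≤ (B.det / A.det) * (x ⬝ᵥ B⁻¹.mulVec x) := by
  have h := (hA.inv_le_det_div_det_smul_inv hB hAB).dotProduct_mulVec_nonneg x
  rwa [sub_mulVec, smul_mulVec, dotProduct_sub, dotProduct_smul, smul_eq_mul, star_trivial,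
    sub_nonneg] at h
end

section
/- Suppose for all x in a set X and reward function h we have h(x) ≤ U_a(x) and h(x) ≤ U_b(x) + ε, where U_a, U_b : X → ℝ and ε ≥ 0. Let α ∈ [0,1] and let x* maximize h over X, and x̂ maximize (1−α)U_a + αU_b over X. Then h(x*) − h(x̂) ≤ (1−α)(U_a(x̂) − h(x̂)) + α(U_b(x̂) − h(x̂)) + 2αε. -/
theorem stmt_8 {X : Type*} (h Ua Ub : X → ℝ) (ε α : ℝ)
    (hε : 0 ≤ ε) (hα0 : 0 ≤ α) (hα1 : α ≤ 1)
    (hUa : ∀ x, h x ≤ Ua x) (hUb : ∀ x, h x ≤ Ub x + ε)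
    (xstar xhat : X)
    (hxstar : ∀ x, h x ≤ h xstar)
    (hxhat : ∀ x, (1 - α) * Ua x + α * Ub x ≤ (1 - α) * Ua xhat + α * Ub xhat) :
    h xstar - h xhat
      ≤ (1 - α) * (Ua xhat - h xhat) + α * (Ub xhat - h xhat) + 2 * α * ε := by
  nlinarith [hUa xstar, hUb xstar, hxhat xstar, mul_nonneg hα0 hε]
end

section
/- If P ≥ 1 epochs partition T iterations, ζ = √(DT/R) > 0, and every epoch of length < ζ contributes more than D/ζ to a total budget ∑_p b_p ≤ R (with b_p > D/ζ for each short epoch), then the total number of epochs is at most ⌈T/ζ⌉ + ⌈Rζ/D⌉ = O(√(TR/D)). -/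
open Finset

theorem stmt_11 {P : ℕ} (hP : 1 ≤ P) (T : ℕ) (D R : ℝ) (hT : 0 < T)
    (hD : 0 < D) (hR : 0 < R)
    (E : Fin P → ℕ) (hE : ∀ p, 1 ≤ E p) (hsumE : ∑ p, E p = T)
    (b : Fin P → ℝ) (hb : ∀ p, 0 ≤ b p) (hsumb : ∑ p, b p ≤ R)
    (ζ : ℝ) (hζ : ζ = Real.sqrt (D * T / R))
    (hshort : ∀ p, (E p : ℝ) < ζ → D / ζ < b p) :
    P ≤ ⌈(T : ℝ) / ζ⌉₊ + ⌈R * ζ / D⌉₊ := by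
  classical
  have hζpos : 0 < ζ := by
    rw [hζ]; apply Real.sqrt_pos.mpr
    have : (0 : ℝ) < T := by exact_mod_cast hT
    positivity
  set S := Finset.univ.filter (fun p : Fin P => (E p : ℝ) < ζ) with hS
  set L := Finset.univ.filter (fun p : Fin P => ¬ (E p : ℝ) < ζ) with hL
  have hcard : S.card + L.card = P := by
    rw [Finset.card_filter_add_card_filter_not]
    simp
  have hLle : (L.card : ℝ) * ζ ≤ T := by
    calc (L.card : ℝ) * ζ = ∑ _p ∈ L, ζ := by rw [Finset.sum_const, nsmul_eq_mul]
    _ ≤ ∑ p ∈ L, (E p : ℝ) := Finset.sum_le_sum (fun p hp => by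
        simp only [hL, Finset.mem_filter] at hp; exact le_of_not_gt hp.2)
    _ ≤ ∑ p, (E p : ℝ) := Finset.sum_le_sum_of_subset_of_nonneg (Finset.subset_univ _)
        (fun p _ _ => by positivity)
    _ = T := by rw [← Nat.cast_sum, hsumE]
  have hSle : (S.card : ℝ) * (D / ζ) ≤ R := by
    calc (S.card : ℝ) * (D / ζ) = ∑ _p ∈ S, D / ζ := by rw [Finset.sum_const, nsmul_eq_mul]
    _ ≤ ∑ p ∈ S, b p := Finset.sum_le_sum (fun p hp => by
        simp only [hS, Finset.mem_filter] at hp; exact le_of_lt (hshort p hp.2))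
    _ ≤ ∑ p, b p := Finset.sum_le_sum_of_subset_of_nonneg (Finset.subset_univ _)
        (fun p _ _ => hb p)
    _ ≤ R := hsumb
  have h1 : L.card ≤ ⌈(T : ℝ) / ζ⌉₊ := by
    have h : (L.card : ℝ) ≤ (T : ℝ) / ζ := (le_div_iff₀ hζpos).mpr hLle
    exact_mod_cast h.trans (Nat.le_ceil _)
  have h2 : S.card ≤ ⌈R * ζ / D⌉₊ := by
    have hdz : 0 < D / ζ := div_pos hD hζpos
    have h : (S.card : ℝ) ≤ R / (D / ζ) := (le_div_iff₀ hdz).mpr hSle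
    have heq : R / (D / ζ) = R * ζ / D := by field_simp
    rw [heq] at h
    exact_mod_cast h.trans (Nat.le_ceil _)
  omega
end

section
/- Suppose within an epoch starting at iteration t_p of length E_p, the per-iteration regrets satisfy r_t ≤ 2 for all t, and for t_p + 1 ≤ t ≤ t_p + E_p − 2 we have r_t ≤ 2ν√κ₀ · min(w_t, 1) with ∑_{t=t_p}^{t_p+E_p−2} min(w_t², 1) ≤ 2 log(det V_end / det V_start) and (E_p − 1) log(det V_end / det V_start) ≤ D. Then the total epoch regret satisfies ∑_{t=t_p}^{t_p+E_p−1} r_t ≤ 4 + 2ν√(2κ₀D). -/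
/-!
The two boundary iterations cost at most 2 each. On the interior iterations the regret is
`2ν√κ₀ · min(w_t, 1)`, and by Cauchy–Schwarz the sum of the clipped widths is at most
`√((E_p - 1) · ∑ min(w_t², 1)) ≤ √(2 (E_p - 1) log(det V_end / det V_start)) ≤ √(2D)`,
the last step being the communication trigger.
-/

open Finset Real

lemma sum_Icc_eq_first_add_sum_add_last {M : Type*} [AddCommMonoid M] (f : ℕ → M) (a m : ℕ) :
    ∑ i ∈ Icc a (a + m + 1), f i = f a + ∑ i ∈ Icc (a + 1) (a + m), f i + f (a + m + 1) := by
  rw [sum_Icc_succ_top (by omega), Icc_eq_cons_Ioc (by omega), sum_cons, ← Icc_add_one_left_eq_Ioc]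

lemma min_one_sq {x : ℝ} (hx : 0 ≤ x) : min x 1 ^ 2 = min (x ^ 2) 1 := by
  rcases le_total x 1 with h | h
  · rw [min_eq_left h, min_eq_left (pow_le_one₀ hx h)]
  · rw [min_eq_right h, min_eq_right (one_le_pow₀ h), one_pow]

lemma sum_min_one_le_sqrt_card_mul {ι : Type*} (s : Finset ι) {w : ι → ℝ} (hw : ∀ i ∈ s, 0 ≤ w i) :
    ∑ i ∈ s, min (w i) 1 ≤ √(#s * ∑ i ∈ s, min (w i ^ 2) 1) := by
  refine le_sqrt_of_sq_le ((sq_sum_le_card_mul_sum_sq).trans_eq ?_)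
  rw [sum_congr rfl fun i hi => min_one_sq (hw i hi)]

theorem stmt_15_general (tp Ep : ℕ) (hEp : 2 ≤ Ep) (r w : ℕ → ℝ)
    (ν κ₀ D dStart dEnd : ℝ)
    (hν : 0 < ν)
    (hw : ∀ t, 0 ≤ w t)
    (hr2 : ∀ t, r t ≤ 2)
    (hrmid : ∀ t ∈ Finset.Icc (tp + 1) (tp + Ep - 2),
      r t ≤ 2 * ν * Real.sqrt κ₀ * min (w t) 1)
    (hsumw : ∑ t ∈ Finset.Icc tp (tp + Ep - 2), min ((w t) ^ 2) 1
      ≤ 2 * Real.log (dEnd / dStart))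
    (hlog : ((Ep : ℝ) - 1) * Real.log (dEnd / dStart) ≤ D) :
    ∑ t ∈ Finset.Icc tp (tp + Ep - 1), r t ≤ 4 + 2 * ν * Real.sqrt (2 * κ₀ * D) := by
  obtain ⟨m, rfl⟩ : ∃ m, Ep = m + 2 := ⟨Ep - 2, by omega⟩
  rw [show tp + (m + 2) - 1 = tp + m + 1 by omega, sum_Icc_eq_first_add_sum_add_last]
  rw [show tp + (m + 2) - 2 = tp + m by omega] at hrmid hsumw
  push_cast at hlog
  set L := log (dEnd / dStart)
  have hL : 0 ≤ L := by
    have := sum_nonneg fun t (_ : t ∈ Icc tp (tp + m)) => le_min (sq_nonneg (w t)) zero_le_one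
    linarith
  have hpotential : (m : ℝ) * (2 * L) ≤ 2 * D := by nlinarith
  have hwidths : ∑ t ∈ Icc (tp + 1) (tp + m), min (w t ^ 2) 1 ≤ 2 * L :=
    (sum_le_sum_of_subset_of_nonneg (Icc_subset_Icc_left (by omega))
      fun t _ _ => le_min (sq_nonneg (w t)) zero_le_one).trans hsumw
  have hCS : ∑ t ∈ Icc (tp + 1) (tp + m), min (w t) 1 ≤ √(2 * D) := by
    refine (sum_min_one_le_sqrt_card_mul _ fun t _ => hw t).trans (sqrt_le_sqrt ?_)
    rw [Nat.card_Icc, show tp + m + 1 - (tp + 1) = m by omega]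
    exact (mul_le_mul_of_nonneg_left hwidths m.cast_nonneg).trans hpotential
  have hmiddle : ∑ t ∈ Icc (tp + 1) (tp + m), r t ≤ 2 * ν * √(2 * κ₀ * D) := calc
    _ ≤ ∑ t ∈ Icc (tp + 1) (tp + m), 2 * ν * √κ₀ * min (w t) 1 := sum_le_sum hrmid
    _ ≤ 2 * ν * √κ₀ * √(2 * D) := by rw [← mul_sum]; gcongr
    _ = 2 * ν * √(2 * κ₀ * D) := by
      rw [mul_assoc, ← sqrt_mul' _ (by linarith [mul_nonneg m.cast_nonneg hL])]; ring_nf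
  linarith [hr2 tp, hr2 (tp + m + 1)]

theorem stmt_15 (tp Ep : ℕ) (hEp : 2 ≤ Ep) (r w : ℕ → ℝ)
    (ν κ₀ D dStart dEnd : ℝ)
    (hν : 0 < ν) (hκ : 0 < κ₀) (hD : 0 < D) (hdS : 0 < dStart) (hdSE : dStart ≤ dEnd)
    (hw : ∀ t, 0 ≤ w t)
    (hr2 : ∀ t, r t ≤ 2)
    (hrmid : ∀ t ∈ Finset.Icc (tp + 1) (tp + Ep - 2),
      r t ≤ 2 * ν * Real.sqrt κ₀ * min (w t) 1)
    (hsumw : ∑ t ∈ Finset.Icc tp (tp + Ep - 2), min ((w t) ^ 2) 1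
      ≤ 2 * Real.log (dEnd / dStart))
    (hlog : ((Ep : ℝ) - 1) * Real.log (dEnd / dStart) ≤ D) :
    ∑ t ∈ Finset.Icc tp (tp + Ep - 1), r t ≤ 4 + 2 * ν * Real.sqrt (2 * κ₀ * D) :=
  stmt_15_general tp Ep hEp r w ν κ₀ D dStart dEnd hν hw hr2 hrmid hsumw hlog
end

section
/- Let V_t = λI + ∑_{τ=1}^{t} x_τ x_τᵀ for vectors x_τ ∈ ℝ^p with ‖x_τ‖₂ ≤ L and λ ≥ 1. Then ∑_{t=1}^{n} min(x_tᵀ V_{t-1}⁻¹ x_t, 1) ≤ 2 log(det V_n / det V_0). -/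
/-!
Since `V t = V (t-1) + x_t x_tᵀ`, the matrix determinant lemma gives
`det V t = det V (t-1) * (1 + x_tᵀ V (t-1)⁻¹ x_t)`, so `log det V t` telescopes against the sum of
`log (1 + x_tᵀ V (t-1)⁻¹ x_t)`, and each summand dominates `min (x_tᵀ V (t-1)⁻¹ x_t) 1 / 2`.
-/

open Matrix Finset

theorem Real.min_le_two_mul_log_one_add {u : ℝ} (hu : 0 ≤ u) :
    min u 1 ≤ 2 * Real.log (1 + u) := by
  have hpos : 0 < 1 + u := by linarith
  -- `log (1 + u) ≥ u / (1 + u)`, which is at least `u / 2` for `u ≤ 1` and at least `1 / 2` beyond.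
  have hlog : 1 - (1 + u)⁻¹ ≤ Real.log (1 + u) := Real.one_sub_inv_le_log_of_pos hpos
  have hfrac : min u 1 ≤ 2 * (1 - (1 + u)⁻¹) := by
    rw [show 1 - (1 + u)⁻¹ = u / (1 + u) by field_simp; ring, mul_div_assoc', le_div_iff₀ hpos]
    rcases le_total u 1 with h | h
    · rw [min_eq_left h]; nlinarith
    · rw [min_eq_right h]; linarith
  linarith

namespace Matrix

variable {ι : Type*} [Fintype ι]

theorem det_add_vecMulVec [DecidableEq ι] {R : Type*} [CommRing R] {A : Matrix ι ι R}
    (hA : IsUnit A.det) (u v : ι → R) :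
    (A + vecMulVec u v).det = A.det * (1 + v ⬝ᵥ A⁻¹ *ᵥ u) := by
  rw [vecMulVec_eq Unit, det_add_replicateCol_mul_replicateRow hA, Matrix.mul_assoc,
    ← replicateCol_mulVec, det_unique (1 + _ : Matrix Unit Unit R)]
  simp only [add_apply, one_apply_eq, replicateRow_mul_replicateCol_apply]

theorem PosDef.add_vecMulVec_self {A : Matrix ι ι ℝ} (hA : A.PosDef) (v : ι → ℝ) :
    (A + vecMulVec v v).PosDef :=
  hA.add_posSemidef (by simpa using posSemidef_vecMulVec_self_star v)

theorem PosDef.min_dotProduct_inv_mulVec_le_two_mul_log_det_div [DecidableEq ι]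
    {A : Matrix ι ι ℝ} (hA : A.PosDef) (v : ι → ℝ) :
    min (v ⬝ᵥ A⁻¹ *ᵥ v) 1 ≤ 2 * Real.log ((A + vecMulVec v v).det / A.det) := by
  have hquad : 0 ≤ v ⬝ᵥ A⁻¹ *ᵥ v := by
    simpa using hA.inv.posSemidef.dotProduct_mulVec_nonneg v
  have hdet : A.det ≠ 0 := hA.det_pos.ne'
  rw [det_add_vecMulVec (isUnit_iff_ne_zero.mpr hdet), mul_div_cancel_left₀ _ hdet]
  exact Real.min_le_two_mul_log_one_add hquad

theorem sum_min_dotProduct_inv_mulVec_le_two_mul_log_det_div [DecidableEq ι]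
    {V : ℕ → Matrix ι ι ℝ} {x : ℕ → ι → ℝ} (h0 : (V 0).PosDef)
    (hV : ∀ t, V (t + 1) = V t + vecMulVec (x (t + 1)) (x (t + 1))) (n : ℕ) :
    ∑ t ∈ Icc 1 n, min (x t ⬝ᵥ (V (t - 1))⁻¹ *ᵥ x t) 1 ≤ 2 * Real.log ((V n).det / (V 0).det) := by
  have hPD : ∀ t, (V t).PosDef := Nat.rec h0 fun t ht => hV t ▸ ht.add_vecMulVec_self _
  induction n with
  | zero => simp
  | succ n ih =>
    rw [sum_Icc_succ_top (by omega), Nat.add_sub_cancel]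
    have hstep := (hPD n).min_dotProduct_inv_mulVec_le_two_mul_log_det_div (x (n + 1))
    rw [← hV] at hstep
    have hdet (t : ℕ) : (V t).det ≠ 0 := (hPD t).det_pos.ne'
    have hlog : Real.log ((V (n + 1)).det / (V 0).det)
        = Real.log ((V (n + 1)).det / (V n).det) + Real.log ((V n).det / (V 0).det) := by
      rw [← Real.log_mul (div_ne_zero (hdet (n + 1)) (hdet n)) (div_ne_zero (hdet n) (hdet 0)),
        div_mul_div_cancel₀ (hdet n)]
    linarith

end Matrix

theorem stmt_16_general {p : ℕ} (n : ℕ) (x : ℕ → (Fin p → ℝ)) (lam : ℝ)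
    (hlam : 1 ≤ lam)
    (V : ℕ → Matrix (Fin p) (Fin p) ℝ)
    (hV : ∀ t, V t = lam • (1 : Matrix (Fin p) (Fin p) ℝ)
      + ∑ τ ∈ Finset.Icc 1 t, Matrix.vecMulVec (x τ) (x τ)) :
    ∑ t ∈ Finset.Icc 1 n, min (x t ⬝ᵥ (V (t - 1))⁻¹.mulVec (x t)) 1
      ≤ 2 * Real.log ((V n).det / (V 0).det) := by
  refine sum_min_dotProduct_inv_mulVec_le_two_mul_log_det_div ?_ (fun t => ?_) n
  · rw [hV 0, Icc_eq_empty (by omega), sum_empty, add_zero]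
    exact PosDef.one.smul (by linarith)
  · rw [hV, hV, sum_Icc_succ_top (by omega), add_assoc]

theorem stmt_16 {p : ℕ} (n : ℕ) (x : ℕ → (Fin p → ℝ)) (L lam : ℝ)
    (hlam : 1 ≤ lam) (hL : ∀ τ, Real.sqrt (x τ ⬝ᵥ x τ) ≤ L)
    (V : ℕ → Matrix (Fin p) (Fin p) ℝ)
    (hV : ∀ t, V t = lam • (1 : Matrix (Fin p) (Fin p) ℝ)
      + ∑ τ ∈ Finset.Icc 1 t, Matrix.vecMulVec (x τ) (x τ)) :
    ∑ t ∈ Finset.Icc 1 n, min (x t ⬝ᵥ (V (t - 1))⁻¹.mulVec (x t)) 1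
      ≤ 2 * Real.log ((V n).det / (V 0).det) :=
  stmt_16_general n x lam hlam V hV
end
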